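/- The function x ↦ ψ(x) + ln(e^{1/x} − 1) is strictly increasing on (0,∞) and tends to 0 as x → ∞. -/

import Mathlib

open Filter

noncomputable def psi : ℝ → ℝ := deriv (fun x => Real.log (Real.Gamma x))

/-!
Write `φ x = ψ x + log (e^{1/x} - 1)`. The recurrence `ψ (x + 1) = ψ x + 1 / x` gives
`φ (x + 1) = φ x + g x` with `g t = 1 / t + log (e^{1/(t+1)} - 1) - log (e^{1/t} - 1)`, and
`g' < 0` amounts to `(t + 1)² (1 - e^{-1/(t+1)}) < t² (e^{1/t} - 1)`: both sides are
`t + 1/2 + O(1/t)`, and the Taylor expansions of `e^{±u}` to third order (plus the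
fourth-order remainder for `e^{-u}`) already separate them. Once `φ`
is known to converge, `φ (y + n) - φ (x + n) → 0`, so telescoping gives
`φ y - φ x ≥ g x - g y > 0` for `x < y`.

For the limit, convexity of `log ∘ Γ` on `[x, x + 1]` gives `log x - 1 / x ≤ ψ x ≤ log x`,
while `u ≤ e^u - 1 ≤ u e^u` gives `-log x ≤ log (e^{1/x} - 1) ≤ 1 / x - log x`;
hence `|φ x| ≤ 1 / x`.
-/

open Real Set Topology

theorem exp_sub_one_pos {u : ℝ} (hu : 0 < u) : 0 < exp u - 1 :=
  sub_pos.mpr (one_lt_exp_iff.mpr hu)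

theorem one_sub_exp_neg_pos {s : ℝ} (hs : 0 < s) : 0 < 1 - exp (-s) :=
  sub_pos.mpr (exp_lt_one_iff.mpr (neg_neg_of_pos hs))

theorem log_le_log_exp_sub_one {u : ℝ} (hu : 0 < u) : log u ≤ log (exp u - 1) :=
  log_le_log hu (by linarith [add_one_le_exp u])

theorem log_exp_sub_one_le {u : ℝ} (hu : 0 < u) : log (exp u - 1) ≤ log u + u := by
  have hbound : exp u - 1 ≤ u * exp u := by
    have h := mul_le_mul_of_nonneg_left (one_sub_le_exp_neg u) (exp_pos u).le
    rw [← exp_add, add_neg_cancel, exp_zero] at h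
    linarith
  calc log (exp u - 1) ≤ log (u * exp u) := log_le_log (exp_sub_one_pos hu) hbound
    _ = log u + u := by rw [log_mul hu.ne' (exp_pos u).ne', log_exp]

theorem cubic_le_exp_sub_one {u : ℝ} (hu : 0 ≤ u) : u + u ^ 2 / 2 + u ^ 3 / 6 ≤ exp u - 1 := by
  have h := sum_le_exp_of_nonneg hu 4
  simp only [Finset.sum_range_succ, Finset.sum_range_zero, Nat.factorial] at h
  norm_num at h
  linarith

theorem one_sub_exp_neg_le {s : ℝ} (hs₀ : 0 ≤ s) (hs₁ : s ≤ 1) :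
    1 - exp (-s) ≤ s - s ^ 2 / 2 + s ^ 3 / 6 + 5 * s ^ 4 / 96 := by
  have h := exp_bound (x := -s) (by rwa [abs_neg, abs_of_nonneg hs₀]) (n := 4) (by norm_num)
  simp only [Finset.sum_range_succ, Finset.sum_range_zero, Nat.factorial, abs_neg,
    abs_of_nonneg hs₀] at h
  norm_num at h
  linarith [(abs_le.mp h).1]

theorem sq_mul_one_sub_exp_neg_lt {t : ℝ} (ht : 0 < t) :
    (t + 1) ^ 2 * (1 - exp (-(1 / (t + 1)))) < t ^ 2 * (exp (1 / t) - 1) := by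
  have hs : 1 / (t + 1) ≤ 1 := by rw [div_le_one (by linarith)]; linarith
  calc (t + 1) ^ 2 * (1 - exp (-(1 / (t + 1))))
      ≤ (t + 1) ^ 2 * (1 / (t + 1) - (1 / (t + 1)) ^ 2 / 2 + (1 / (t + 1)) ^ 3 / 6
          + 5 * (1 / (t + 1)) ^ 4 / 96) := by
        gcongr
        exact one_sub_exp_neg_le (by positivity) hs
    _ = t + 1 / 2 + 1 / (6 * (t + 1)) + 5 / (96 * (t + 1) ^ 2) := by field_simp; ring
    _ < t + 1 / 2 + 1 / (6 * t) := by
        have : 1 / (6 * (t + 1)) + 5 / (96 * (t + 1) ^ 2) < 1 / (6 * t) := by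
          rw [div_add_div _ _ (by positivity) (by positivity),
            div_lt_div_iff₀ (by positivity) (by positivity)]
          nlinarith
        linarith
    _ = t ^ 2 * (1 / t + (1 / t) ^ 2 / 2 + (1 / t) ^ 3 / 6) := by field_simp
    _ ≤ t ^ 2 * (exp (1 / t) - 1) := by
        gcongr
        exact cubic_le_exp_sub_one (by positivity)

section Telescoping

variable {f g : ℝ → ℝ} {a : ℝ}

theorem add_nat_eq_add_sum_of_add_one (hfg : ∀ x, a < x → f (x + 1) = f x + g x)
    {x : ℝ} (hx : a < x) (n : ℕ) :
    f (x + n) = f x + ∑ k ∈ Finset.range n, g (x + k) := by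
  induction n with
  | zero => simp
  | succ n ih =>
    rw [Nat.cast_succ, ← add_assoc, hfg _ (by linarith [n.cast_nonneg (α := ℝ)]), ih,
      Finset.sum_range_succ, add_assoc]

theorem strictMonoOn_of_add_one_of_tendsto (hfg : ∀ x, a < x → f (x + 1) = f x + g x)
    (hg : StrictAntiOn g (Ioi a)) {L : ℝ} (hf : Tendsto f atTop (𝓝 L)) :
    StrictMonoOn f (Ioi a) := by
  intro x hx y hy hxy
  have hshift (z : ℝ) : Tendsto (fun n : ℕ => f (z + n)) atTop (𝓝 L) :=
    hf.comp (tendsto_atTop_add_const_left _ z tendsto_natCast_atTop_atTop)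
  have hlim : Tendsto (fun n : ℕ => f (y + n) - f (x + n) + (g x - g y)) atTop
      (𝓝 (g x - g y)) := by
    simpa using ((hshift y).sub (hshift x)).add_const (g x - g y)
  have hle (n : ℕ) (hn : 1 ≤ n) : f (y + n) - f (x + n) + (g x - g y) ≤ f y - f x := by
    have hterm (k : ℕ) : 0 ≤ g (x + k) - g (y + k) := by
      have hk : (0 : ℝ) ≤ k := k.cast_nonneg
      rw [mem_Ioi] at hx hy
      exact sub_nonneg.mpr (hg.antitoneOn (by rw [mem_Ioi]; linarith)
        (by rw [mem_Ioi]; linarith) (by linarith))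
    have hsum : g x - g y ≤ ∑ k ∈ Finset.range n, (g (x + k) - g (y + k)) := by
      simpa using Finset.single_le_sum (fun k _ => hterm k) (Finset.mem_range.mpr hn)
    rw [Finset.sum_sub_distrib] at hsum
    rw [add_nat_eq_add_sum_of_add_one hfg hx, add_nat_eq_add_sum_of_add_one hfg hy]
    linarith
  linarith [hg hx hy hxy, le_of_tendsto hlim (eventually_atTop.mpr ⟨1, hle⟩)]

end Telescoping

theorem differentiableAt_log_Gamma {x : ℝ} (hx : 0 < x) :
    DifferentiableAt ℝ (fun x => log (Gamma x)) x :=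
  (differentiableAt_Gamma fun m => by linarith [m.cast_nonneg (α := ℝ)]).log
    (Gamma_pos_of_pos hx).ne'

theorem log_Gamma_add_one {x : ℝ} (hx : 0 < x) :
    log (Gamma (x + 1)) = log (Gamma x) + log x := by
  rw [Gamma_add_one hx.ne', log_mul hx.ne' (Gamma_pos_of_pos hx).ne', add_comm]

theorem psi_add_one {x : ℝ} (hx : 0 < x) : psi (x + 1) = psi x + x⁻¹ := by
  rw [psi, ← deriv_comp_add_const, ← deriv_log,
    ← deriv_add (differentiableAt_log_Gamma hx) (differentiableAt_log hx.ne')]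
  apply EventuallyEq.deriv_eq
  filter_upwards [eventually_gt_nhds hx] with y hy using log_Gamma_add_one hy

theorem psi_le_log {x : ℝ} (hx : 0 < x) : psi x ≤ log x := by
  refine (convexOn_log_Gamma.deriv_le_slope hx (by linarith : 0 < x + 1) (by linarith)
    (differentiableAt_log_Gamma hx)).trans_eq ?_
  rw [slope_def_field, add_sub_cancel_left, div_one, Function.comp_apply, Function.comp_apply,
    log_Gamma_add_one hx, add_sub_cancel_left]

theorem log_le_psi_add_one {x : ℝ} (hx : 0 < x) : log x ≤ psi (x + 1) := by
  refine (le_of_eq ?_).trans (convexOn_log_Gamma.slope_le_deriv hx (by linarith : 0 < x + 1)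
    (by linarith) (differentiableAt_log_Gamma (by linarith)))
  rw [slope_def_field, add_sub_cancel_left, div_one, Function.comp_apply, Function.comp_apply,
    log_Gamma_add_one hx, add_sub_cancel_left]

noncomputable def phi (x : ℝ) : ℝ := psi x + log (exp (1 / x) - 1)

theorem abs_phi_le {x : ℝ} (hx : 0 < x) : |phi x| ≤ x⁻¹ := by
  have hu : 0 < 1 / x := one_div_pos.mpr hx
  have hlog : log (1 / x) = -log x := by rw [one_div, log_inv]
  have h₁ := log_le_log_exp_sub_one hu
  have h₂ := log_exp_sub_one_le hu
  have h₃ := psi_le_log hx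
  have h₄ := psi_add_one hx ▸ log_le_psi_add_one hx
  rw [phi, abs_le]
  constructor <;> linarith [one_div x]

theorem tendsto_phi_atTop : Tendsto phi atTop (𝓝 0) := by
  refine squeeze_zero_norm' ?_ tendsto_inv_atTop_zero
  filter_upwards [eventually_gt_atTop 0] with x hx using abs_phi_le hx

noncomputable def phiStep (t : ℝ) : ℝ :=
  1 / t + log (exp (1 / (t + 1)) - 1) - log (exp (1 / t) - 1)

theorem phi_add_one {x : ℝ} (hx : 0 < x) : phi (x + 1) = phi x + phiStep x := by
  rw [phi, phi, phiStep, psi_add_one hx, one_div x]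
  ring

theorem hasDerivAt_log_exp_one_div_sub_one {t : ℝ} (ht : 0 < t) :
    HasDerivAt (fun t => log (exp (1 / t) - 1))
      (exp (1 / t) * -(t ^ 2)⁻¹ / (exp (1 / t) - 1)) t := by
  have hinv : HasDerivAt (fun t : ℝ => 1 / t) (-(t ^ 2)⁻¹) t := by
    simpa only [one_div] using hasDerivAt_inv ht.ne'
  exact (hinv.exp.sub_const 1).log (exp_sub_one_pos (one_div_pos.mpr ht)).ne'

theorem hasDerivAt_phiStep {t : ℝ} (ht : 0 < t) :
    HasDerivAt phiStep
      (1 / (t ^ 2 * (exp (1 / t) - 1)) - 1 / ((t + 1) ^ 2 * (1 - exp (-(1 / (t + 1)))))) t := by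
  have ht₁ : 0 < t + 1 := by linarith
  have hshift := (hasDerivAt_log_exp_one_div_sub_one ht₁).comp t ((hasDerivAt_id t).add_const 1)
  have h := ((hasDerivAt_inv ht.ne').add hshift).sub (hasDerivAt_log_exp_one_div_sub_one ht)
  refine (h.congr_deriv ?_).congr_of_eventuallyEq (.of_forall fun y => ?_)
  · have ha := (exp_sub_one_pos (one_div_pos.mpr ht)).ne'
    have hb := (exp_sub_one_pos (one_div_pos.mpr ht₁)).ne'
    have hc := (one_sub_exp_neg_pos (one_div_pos.mpr ht₁)).ne'
    rw [exp_neg] at hc ⊢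
    field_simp
    ring
  · simp [phiStep]

theorem strictAntiOn_phiStep : StrictAntiOn phiStep (Ioi 0) := by
  refine strictAntiOn_of_hasDerivWithinAt_neg (convex_Ioi 0)
    (fun t ht => (hasDerivAt_phiStep ht).continuousAt.continuousWithinAt)
    (fun t ht => (hasDerivAt_phiStep (interior_subset ht)).hasDerivWithinAt) fun t ht => ?_
  rw [interior_Ioi, mem_Ioi] at ht
  have hpos : 0 < (t + 1) ^ 2 * (1 - exp (-(1 / (t + 1)))) :=
    mul_pos (by positivity) (one_sub_exp_neg_pos (by positivity))
  exact sub_neg.mpr (one_div_lt_one_div_of_lt hpos (sq_mul_one_sub_exp_neg_lt ht))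

theorem phi_strictMono_and_limit :
    StrictMonoOn (fun x : ℝ => psi x + Real.log (Real.exp (1 / x) - 1)) (Set.Ioi 0) ∧
    Tendsto (fun x : ℝ => psi x + Real.log (Real.exp (1 / x) - 1)) atTop (nhds 0) :=
  ⟨strictMonoOn_of_add_one_of_tendsto (fun _ hx => phi_add_one hx) strictAntiOn_phiStep
    tendsto_phi_atTop, tendsto_phi_atTop⟩
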